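/- Let G be a finite group acting on a simplicial space X_* (i.e., G acts continuously on each level X_n and the actions commute with all face and degeneracy maps), and suppose each X_n is Hausdorff. Then for every subgroup H ≤ G, the natural map |X_*^H| → |X_*|^H is a homeomorphism, where X_*^H is the simplicial space of levelwise H-fixed points and |X_*|^H is the H-fixed-point subspace of the realization under the induced G-action. -/

import Mathlib

/-!
Every point of `|W|` has a unique representative `(y, s)` with `y` nondegenerate and `s` in the
interior of its simplex: restrict to the face of `Δⁿ` carrying `s` in its interior, then write the
restricted simplex as `τ^* y` with `τ` epi and `y` nondegenerate (Eilenberg–Zilber). A levelwise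
injective map preserves and reflects nondegeneracy, so normal forms commute with `W^H → W`, and
`|W^H| → |W|` is injective. If the class of `(y, s)` is `H`-fixed, then `(g • y, s)` represents
the same point with the same interior `s`, so uniqueness forces `g • y = y`: the map hits every
fixed point. It is closed because in `Wₙ × Δⁿ` the points over the image of a closed set form a
finite union, over faces `ι`, degeneracies `τ` and sections `σ`, of images under `id × ι_*` of
sets cut out by closed conditions (the levels are Hausdorff), and `id × ι_*` is a closed map since
`Δᵏ` is compact.
-/

noncomputable section

universe u

open scoped Topology
open CategoryTheory CategoryTheory.Limits Opposite Simplicial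

/-- The topological simplex `{f : Fin (x.len + 1) → ℝ≥0 | ∑ i, f i = 1}` (the definition of
`SimplexCategory.toTopObj` in the older Mathlib, which no longer has it). -/
def SimplexCategory.toTopObj (x : SimplexCategory) : Set (Fin (x.len + 1) → NNReal) :=
  { f | ∑ i, f i = 1 }

/-- The map of topological simplices induced by a morphism of `SimplexCategory` (the definition of
`SimplexCategory.toTopMap` in the older Mathlib). -/
def SimplexCategory.toTopMap {x y : SimplexCategory} (f : x ⟶ y) (g : x.toTopObj) :
    y.toTopObj :=
  ⟨fun i => ∑ j ∈ Finset.univ.filter (f.toOrderHom · = i), g.1 j, by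
    simp only [SimplexCategory.toTopObj, Set.mem_ofPred_eq]
    rw [← Finset.sum_biUnion]
    · have hg : ∑ i : Fin (x.len + 1), g.1 i = 1 := g.2
      convert hg
      simp [Finset.eq_univ_iff_forall]
    · convert Set.pairwiseDisjoint_filter _ _ _⟩


/-- The total space `∐ₙ Wₙ × Δⁿ` from which the geometric realization of a simplicial
space `W` is built. -/
def GeomRealPre (W : SimplicialObject TopCat.{u}) : Type u :=
  Σ n : SimplexCategory, W.obj (op n) × n.toTopObj

instance (W : SimplicialObject TopCat.{u}) : TopologicalSpace (GeomRealPre W) :=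
  inferInstanceAs (TopologicalSpace (Σ n : SimplexCategory, W.obj (op n) × n.toTopObj))

/-- The relation `(θ* x, t) ∼ (x, θ_* t)` generating the identifications made in the
geometric realization of a simplicial space. -/
def GeomRealRel (W : SimplicialObject TopCat.{u}) : GeomRealPre W → GeomRealPre W → Prop :=
  fun p q => ∃ θ : p.1 ⟶ q.1,
    p.2.1 = W.map θ.op q.2.1 ∧ q.2.2 = SimplexCategory.toTopMap θ p.2.2

/-- The geometric realization `|W| = (∐ₙ Wₙ × Δⁿ)/∼` of a simplicial space `W`,
where `(θ* x, t) ∼ (x, θ_* t)` for all morphisms `θ` of the simplex category. -/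
def GeomReal (W : SimplicialObject TopCat.{u}) : Type u :=
  Quot (GeomRealRel W)

instance (W : SimplicialObject TopCat.{u}) : TopologicalSpace (GeomReal W) :=
  inferInstanceAs (TopologicalSpace (Quot (GeomRealRel W)))

/-- The point of the geometric realization determined by a point of `Wₙ × Δⁿ`. -/
def GeomReal.mk (W : SimplicialObject TopCat.{u}) {n : SimplexCategory}
    (x : W.obj (op n)) (t : n.toTopObj) : GeomReal W :=
  Quot.mk _ ⟨n, x, t⟩

/-- The continuous map of geometric realizations induced by a map of simplicial spaces. -/
def GeomReal.map {W V : SimplicialObject TopCat.{u}} (f : W ⟶ V) :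
    C(GeomReal W, GeomReal V) where
  toFun := Quot.lift (fun p => GeomReal.mk V (f.app (op p.1) p.2.1) p.2.2)
    (by
      rintro ⟨m, x, t⟩ ⟨n, y, s⟩ ⟨θ, h1, h2⟩
      dsimp at h1 h2 ⊢
      apply Quot.sound
      refine ⟨θ, ?_, h2⟩
      dsimp
      rw [h1]
      exact ConcreteCategory.congr_hom (f.naturality θ.op) y)
  continuous_toFun := by
    apply continuous_quot_lift
    apply continuous_sigma
    intro n
    have h1 : Continuous fun xt : W.obj (op n) × n.toTopObj =>
        (⟨n, f.app (op n) xt.1, xt.2⟩ : GeomRealPre V) :=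
      continuous_sigmaMk.comp ((f.app (op n)).hom.continuous.prodMap continuous_id)
    exact continuous_quot_mk.comp h1

/-- The continuous map `|W| → X` induced by an augmentation `W ⟶ cX` to the constant
simplicial space at `X`. -/
def GeomReal.toAug {W : SimplicialObject TopCat.{u}} {X : TopCat.{u}}
    (e : W ⟶ (Functor.const _).obj X) : C(GeomReal W, X) where
  toFun := Quot.lift (fun p => e.app (op p.1) p.2.1)
    (by
      rintro ⟨m, x, t⟩ ⟨n, y, s⟩ ⟨θ, h1, h2⟩
      dsimp at h1 ⊢
      rw [h1]
      exact ConcreteCategory.congr_hom (e.naturality θ.op) y)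
  continuous_toFun := by
    apply continuous_quot_lift
    apply continuous_sigma
    intro n
    exact (e.app (op n)).hom.continuous.comp continuous_fst

namespace SimplexCategory

variable {x y z : SimplexCategory}

lemma toTopMap_apply (f : x ⟶ y) (t : x.toTopObj) (j : Fin (y.len + 1)) :
    (toTopMap f t).1 j = ∑ i ∈ Finset.univ.filter (f.toOrderHom · = j), t.1 i := rfl

lemma toTopMap_id (t : x.toTopObj) : toTopMap (𝟙 x) t = t := by
  refine Subtype.ext (funext fun j => ?_)
  rw [toTopMap_apply, Finset.sum_eq_single_of_mem j (by simp) (by aesop)]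

lemma toTopMap_comp (f : x ⟶ y) (g : y ⟶ z) (t : x.toTopObj) :
    toTopMap (f ≫ g) t = toTopMap g (toTopMap f t) := by
  refine Subtype.ext (funext fun k => ?_)
  simp only [toTopMap_apply]
  rw [← Finset.sum_biUnion (Set.pairwiseDisjoint_filter _ _ _)]
  congr 1
  ext i
  simp [comp_toOrderHom]

lemma continuous_toTopMap (f : x ⟶ y) : Continuous (toTopMap f) :=
  (continuous_pi fun _ => continuous_finsetSum _ fun i _ =>
    (continuous_apply i).comp continuous_subtype_val).subtype_mk _

instance : CompactSpace x.toTopObj := by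
  rw [← isCompact_iff_compactSpace]
  refine (isCompact_univ_pi fun _ => isCompact_Icc (a := (0 : NNReal)) (b := 1)).of_isClosed_subset
    (isClosed_eq (continuous_finsetSum _ fun i _ => continuous_apply i) continuous_const)
    fun t ht i _ => ⟨zero_le, ?_⟩
  rw [← show ∑ j, t j = 1 from ht]
  exact Finset.single_le_sum (fun j _ => zero_le) (Finset.mem_univ i)

lemma toTopMap_apply_toOrderHom (f : x ⟶ y) [Mono f] (t : x.toTopObj) (i : Fin (x.len + 1)) :
    (toTopMap f t).1 (f.toOrderHom i) = t.1 i := by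
  rw [toTopMap_apply, Finset.sum_eq_single_of_mem i (by simp) fun i' hi' hne =>
    absurd ((mono_iff_injective (f := f)).mp inferInstance (Finset.mem_filter.mp hi').2) hne]

lemma toTopMap_apply_eq_zero (f : x ⟶ y) (t : x.toTopObj) {j : Fin (y.len + 1)}
    (hj : j ∉ Set.range f.toOrderHom) : (toTopMap f t).1 j = 0 := by
  rw [toTopMap_apply]
  exact Finset.sum_eq_zero fun i hi => absurd ⟨i, (Finset.mem_filter.mp hi).2⟩ hj

def IsInterior (t : x.toTopObj) : Prop := ∀ i, t.1 i ≠ 0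

lemma IsInterior.toTopMap (f : x ⟶ y) [Epi f] {t : x.toTopObj} (ht : IsInterior t) :
    IsInterior (toTopMap f t) := by
  intro j hj
  obtain ⟨i, rfl⟩ := (epi_iff_surjective (f := f)).mp inferInstance j
  exact ht i (Finset.sum_eq_zero_iff.mp ((toTopMap_apply f t _).symm.trans hj) i (by simp))

lemma range_eq_of_isInterior (f : x ⟶ y) [Mono f] {t : x.toTopObj} (ht : IsInterior t) :
    Set.range f.toOrderHom = {j | (toTopMap f t).1 j ≠ 0} := by
  ext j
  constructor
  · rintro ⟨i, rfl⟩
    simpa [toTopMap_apply_toOrderHom] using ht i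
  · exact not_imp_comm.mp (toTopMap_apply_eq_zero f t)

lemma sigma_eq_of_toTopMap_eq {k₁ k₂ : SimplexCategory} (f₁ : k₁ ⟶ x) (f₂ : k₂ ⟶ x) [Mono f₁]
    [Mono f₂] {t₁ : k₁.toTopObj} {t₂ : k₂.toTopObj} (ht₁ : IsInterior t₁) (ht₂ : IsInterior t₂)
    (h : toTopMap f₁ t₁ = toTopMap f₂ t₂) :
    (⟨k₁, f₁, t₁⟩ : Σ k, (k ⟶ x) × k.toTopObj) = ⟨k₂, f₂, t₂⟩ := by
  have hinj₁ := (mono_iff_injective (f := f₁)).mp inferInstance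
  have hinj₂ := (mono_iff_injective (f := f₂)).mp inferInstance
  have hrange : Set.range f₁.toOrderHom = Set.range f₂.toOrderHom := by
    rw [range_eq_of_isInterior f₁ ht₁, range_eq_of_isInterior f₂ ht₂, h]
  obtain rfl : k₁ = k₂ := by
    have := Fintype.card_congr (Equiv.setCongr hrange)
    rw [Set.card_range_of_injective hinj₁, Set.card_range_of_injective hinj₂] at this
    exact SimplexCategory.ext (by simpa using this)
  obtain rfl : f₁ = f₂ := Hom.ext _ _ <| OrderHom.ext _ _ <|
    ((f₁.toOrderHom.monotone.strictMono_of_injective hinj₁).range_inj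
      (f₂.toOrderHom.monotone.strictMono_of_injective hinj₂)).mp hrange
  obtain rfl : t₁ = t₂ := Subtype.ext <| funext fun i => by
    rw [← toTopMap_apply_toOrderHom f₁ t₁, h, toTopMap_apply_toOrderHom]
  rfl

lemma exists_mono_isInterior_toTopMap_eq (t : x.toTopObj) :
    ∃ c : Σ k, (k ⟶ x) × k.toTopObj, Mono c.2.1 ∧ IsInterior c.2.2 ∧ toTopMap c.2.1 c.2.2 = t := by
  set s := Finset.univ.filter (t.1 · ≠ 0)
  have hs : s.card = (s.card - 1) + 1 := by
    refine (Nat.succ_pred_eq_of_pos (Finset.card_pos.mpr ?_)).symm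
    by_contra hempty
    have : ∑ i, t.1 i = 0 := Finset.sum_eq_zero fun i _ => by
      by_contra hi
      exact hempty ⟨i, by simp [s, hi]⟩
    exact one_ne_zero (t.2.symm.trans this)
  set e := s.orderEmbOfFin hs
  have hrange : Set.range e = s := Finset.range_orderEmbOfFin s hs
  have hzero : ∀ j ∉ Set.range e, t.1 j = 0 := fun j hj => by
    rw [hrange] at hj
    simpa [s] using hj
  let f : ⦋s.card - 1⦌ ⟶ x := Hom.mk e.toOrderHom
  have hf : Mono f := (mono_iff_injective (f := f)).mpr e.injective
  let t₀ : (⦋s.card - 1⦌ : SimplexCategory).toTopObj :=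
    ⟨fun i => t.1 (e i), (Fintype.sum_of_injective e e.injective _ _ hzero fun _ => rfl).trans t.2⟩
  refine ⟨⟨_, f, t₀⟩, hf, fun i => (Finset.mem_filter.mp (s.orderEmbOfFin_mem hs i)).2,
    Subtype.ext (funext fun j => ?_)⟩
  by_cases hj : j ∈ Set.range e
  · obtain ⟨i, rfl⟩ := hj
    exact toTopMap_apply_toOrderHom f t₀ i
  · rw [toTopMap_apply_eq_zero f t₀ hj, hzero j hj]

def carrier (t : x.toTopObj) : Σ k, (k ⟶ x) × k.toTopObj :=
  (exists_mono_isInterior_toTopMap_eq t).choose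

instance mono_carrier (t : x.toTopObj) : Mono (carrier t).2.1 :=
  (exists_mono_isInterior_toTopMap_eq t).choose_spec.1

lemma isInterior_carrier (t : x.toTopObj) : IsInterior (carrier t).2.2 :=
  (exists_mono_isInterior_toTopMap_eq t).choose_spec.2.1

lemma toTopMap_carrier (t : x.toTopObj) : toTopMap (carrier t).2.1 (carrier t).2.2 = t :=
  (exists_mono_isInterior_toTopMap_eq t).choose_spec.2.2

lemma carrier_toTopMap {k : SimplexCategory} (f : k ⟶ x) [Mono f] {t : k.toTopObj}
    (ht : IsInterior t) : carrier (toTopMap f t) = ⟨k, f, t⟩ :=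
  sigma_eq_of_toTopMap_eq (carrier (toTopMap f t)).2.1 f (isInterior_carrier _) ht
    (toTopMap_carrier _)

end SimplexCategory

namespace CategoryTheory.SimplicialObject

variable {V W : SimplicialObject TopCat.{u}} {n : SimplexCategory}

lemma map_comp_apply {k m : SimplexCategory} (f : k ⟶ m) (g : m ⟶ n) (x : W.obj (op n)) :
    W.map (f ≫ g).op x = W.map f.op (W.map g.op x) := by
  rw [op_comp, W.map_comp, ConcreteCategory.comp_apply]

lemma map_id_apply (x : W.obj (op n)) : W.map (𝟙 n).op x = x := by
  rw [op_id, W.map_id, ConcreteCategory.id_apply]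

def IsNondegenerate (x : W.obj (op n)) : Prop :=
  x ∈ SSet.nonDegenerate (W ⋙ forget TopCat) n.len

lemma exists_epi_isNondegenerate (x : W.obj (op n)) :
    ∃ d : Σ m : SimplexCategory, (n ⟶ m) × W.obj (op m),
      Epi d.2.1 ∧ IsNondegenerate d.2.2 ∧ x = W.map d.2.1.op d.2.2 := by
  obtain ⟨m, f, hf, y, h⟩ := SSet.exists_nonDegenerate (W ⋙ forget TopCat) (n := n.len) x
  exact ⟨⟨⦋m⦌, f, y.1⟩, hf, y.2, h⟩

def ezDecomp (x : W.obj (op n)) : Σ m : SimplexCategory, (n ⟶ m) × W.obj (op m) :=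
  (exists_epi_isNondegenerate x).choose

instance epi_ezDecomp (x : W.obj (op n)) : Epi (ezDecomp x).2.1 :=
  (exists_epi_isNondegenerate x).choose_spec.1

lemma isNondegenerate_ezDecomp (x : W.obj (op n)) : IsNondegenerate (ezDecomp x).2.2 :=
  (exists_epi_isNondegenerate x).choose_spec.2.1

lemma map_ezDecomp (x : W.obj (op n)) : W.map (ezDecomp x).2.1.op (ezDecomp x).2.2 = x :=
  (exists_epi_isNondegenerate x).choose_spec.2.2.symm

lemma ezDecomp_eq {m : SimplexCategory} {x : W.obj (op n)} (f : n ⟶ m) [Epi f]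
    {y : W.obj (op m)} (hy : IsNondegenerate y) (hx : W.map f.op y = x) :
    ezDecomp x = ⟨m, f, y⟩ := by
  have hy' := isNondegenerate_ezDecomp x
  have hx' := map_ezDecomp x
  have := epi_ezDecomp x
  rcases hq : ezDecomp x with ⟨m', f', y'⟩
  rw [hq] at hy' hx' this
  obtain rfl : m' = m := SimplexCategory.ext <| SSet.unique_nonDegenerate_dim
    (W ⋙ forget TopCat) x f' ⟨y', hy'⟩ hx'.symm f ⟨y, hy⟩ hx.symm
  obtain rfl : y' = y := congrArg Subtype.val <| SSet.unique_nonDegenerate_simplex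
    (W ⋙ forget TopCat) x f' ⟨y', hy'⟩ hx'.symm f ⟨y, hy⟩ hx.symm
  obtain rfl : f' = f := SSet.unique_nonDegenerate_map
    (W ⋙ forget TopCat) x f' ⟨y', hy'⟩ hx'.symm f ⟨y', hy⟩ hx.symm
  rfl

lemma isNondegenerate_app_iff (f : V ⟶ W) (hf : ∀ k, Function.Injective (f.app k))
    (y : V.obj (op n)) : IsNondegenerate (f.app (op n) y) ↔ IsNondegenerate y := by
  have (k : SimplexCategoryᵒᵖ) : Mono ((Functor.whiskerRight f (forget TopCat)).app k) :=
    (mono_iff_injective _).mpr (hf k)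
  have := NatTrans.mono_of_mono_app (Functor.whiskerRight f (forget TopCat))
  exact SSet.nonDegenerate_iff_of_mono (Functor.whiskerRight f (forget TopCat)) (n := n.len) y

end CategoryTheory.SimplicialObject

namespace GeomRealPre

open SimplexCategory SimplicialObject

variable {V W : SimplicialObject TopCat.{u}}

def map (f : V ⟶ W) (p : GeomRealPre V) : GeomRealPre W := ⟨p.1, f.app (op p.1) p.2.1, p.2.2⟩

def normalForm (p : GeomRealPre W) : GeomRealPre W :=
  let c := carrier p.2.2
  let d := ezDecomp (W.map c.2.1.op p.2.1)
  ⟨d.1, d.2.2, toTopMap d.2.1 c.2.2⟩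

lemma isNondegenerate_normalForm (p : GeomRealPre W) : IsNondegenerate (normalForm p).2.1 :=
  isNondegenerate_ezDecomp _

lemma isInterior_normalForm (p : GeomRealPre W) : IsInterior (normalForm p).2.2 :=
  (isInterior_carrier _).toTopMap (ezDecomp _).2.1

lemma normalForm_eq {n k m : SimplexCategory} {x : W.obj (op n)} (ι : k ⟶ n) [Mono ι]
    {t : k.toTopObj} (ht : IsInterior t) (τ : k ⟶ m) [Epi τ] {y : W.obj (op m)}
    (hy : IsNondegenerate y) (hxy : W.map ι.op x = W.map τ.op y) :
    normalForm ⟨n, x, toTopMap ι t⟩ = ⟨m, y, toTopMap τ t⟩ := by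
  dsimp only [normalForm]
  rw [carrier_toTopMap ι ht]
  dsimp only
  rw [hxy, ezDecomp_eq τ hy rfl]

lemma mk_normalForm (p : GeomRealPre W) :
    Quot.mk (GeomRealRel W) (normalForm p) = Quot.mk _ p := by
  obtain ⟨n, x, t⟩ := p
  let c := carrier t
  let d := ezDecomp (W.map c.2.1.op x)
  have hface : GeomRealRel W ⟨c.1, W.map c.2.1.op x, c.2.2⟩ ⟨n, x, t⟩ :=
    ⟨c.2.1, rfl, (toTopMap_carrier t).symm⟩
  have hdegen : GeomRealRel W ⟨c.1, W.map c.2.1.op x, c.2.2⟩ (normalForm ⟨n, x, t⟩) :=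
    ⟨d.2.1, (map_ezDecomp _).symm, rfl⟩
  exact (Quot.sound hdegen).symm.trans (Quot.sound hface)

lemma normalForm_eq_of_rel {p q : GeomRealPre W} (h : GeomRealRel W p q) :
    normalForm p = normalForm q := by
  obtain ⟨θ, hx, ht⟩ := h
  obtain ⟨n, x, t⟩ := p
  obtain ⟨n', x', t'⟩ := q
  dsimp only at θ hx ht
  rw [hx, ht]
  obtain ⟨⟨k, ι, t₀⟩, hι, ht₀, rfl⟩ := exists_mono_isInterior_toTopMap_eq t
  dsimp only at ι t₀ hι ht₀ ⊢
  obtain ⟨⟨m, τ, y⟩, hτ, hy, hxy⟩ := exists_epi_isNondegenerate (W.map (image.ι (ι ≫ θ)).op x')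
  dsimp only at τ y hτ hy hxy
  have hp : normalForm ⟨n, W.map θ.op x', toTopMap ι t₀⟩ =
      ⟨m, y, toTopMap (factorThruImage (ι ≫ θ) ≫ τ) t₀⟩ := by
    refine normalForm_eq ι ht₀ _ hy ?_
    rw [map_comp_apply _ τ, ← hxy, ← map_comp_apply, ← map_comp_apply, image.fac]
  have hq : normalForm ⟨n', x', toTopMap θ (toTopMap ι t₀)⟩ =
      ⟨m, y, toTopMap τ (toTopMap (factorThruImage (ι ≫ θ)) t₀)⟩ := by
    have ht : toTopMap θ (toTopMap ι t₀) =
        toTopMap (image.ι (ι ≫ θ)) (toTopMap (factorThruImage (ι ≫ θ)) t₀) := by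
      rw [← toTopMap_comp, ← toTopMap_comp, image.fac]
    rw [ht]
    exact normalForm_eq _ (ht₀.toTopMap _) τ hy hxy
  rw [hp, hq, toTopMap_comp]

theorem mk_eq_mk_iff {p q : GeomRealPre W} :
    Quot.mk (GeomRealRel W) p = Quot.mk _ q ↔ normalForm p = normalForm q := by
  refine ⟨fun h => congrArg (Quot.lift normalForm fun _ _ => normalForm_eq_of_rel) h,
    fun h => by rw [← mk_normalForm p, h, mk_normalForm]⟩

lemma eq_of_mk_eq_mk {c : SimplexCategory} {y z : W.obj (op c)} {s : c.toTopObj}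
    (hy : IsNondegenerate y) (hs : IsInterior s) (h : GeomReal.mk W z s = GeomReal.mk W y s) :
    z = y := by
  obtain ⟨⟨m, τ, y'⟩, hτ, hy', rfl⟩ := exists_epi_isNondegenerate z
  dsimp only at τ y' hτ hy' h ⊢
  have hz := normalForm_eq (𝟙 c) hs τ hy' (map_id_apply _)
  have hy := normalForm_eq (𝟙 c) hs (𝟙 c) hy rfl
  rw [toTopMap_id] at hz hy
  have h := (mk_eq_mk_iff.mp h).symm.trans hz
  rw [hy] at h
  obtain ⟨rfl, h⟩ := Sigma.mk.inj_iff.mp h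
  rw [eq_id_of_epi τ, map_id_apply]
  exact (congrArg Prod.fst (eq_of_heq h)).symm

lemma normalForm_map (f : V ⟶ W) (hf : ∀ k, Function.Injective (f.app k))
    (p : GeomRealPre V) : normalForm (map f p) = map f (normalForm p) := by
  obtain ⟨n, x, t⟩ := p
  obtain ⟨⟨k, ι, t₀⟩, hι, ht₀, rfl⟩ := exists_mono_isInterior_toTopMap_eq t
  obtain ⟨⟨m, τ, y⟩, hτ, hy, hxy⟩ := exists_epi_isNondegenerate (V.map ι.op x)
  dsimp only at ι t₀ hι ht₀ τ y hτ hy hxy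
  have hfxy : W.map ι.op (f.app (op n) x) = W.map τ.op (f.app (op m) y) := by
    rw [← NatTrans.naturality_apply, hxy, NatTrans.naturality_apply]
  rw [map, normalForm_eq ι ht₀ τ hy hxy]
  exact normalForm_eq ι ht₀ τ ((isNondegenerate_app_iff f hf y).mpr hy) hfxy

lemma map_injective (f : V ⟶ W) (hf : ∀ k, Function.Injective (f.app k)) :
    Function.Injective (map f) := by
  rintro ⟨n, x, t⟩ ⟨n', x', t'⟩ h
  obtain ⟨rfl, h⟩ := Sigma.mk.inj_iff.mp h
  obtain ⟨hx, rfl⟩ := Prod.mk_inj.mp (eq_of_heq h)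
  obtain rfl := hf _ hx
  rfl

end GeomRealPre

namespace GeomReal

open SimplexCategory SimplicialObject Topology

variable {V W : SimplicialObject TopCat.{u}}

lemma mk_map {n m : SimplexCategory} (θ : n ⟶ m) (x : W.obj (op m)) (t : n.toTopObj) :
    GeomReal.mk W (W.map θ.op x) t = GeomReal.mk W x (toTopMap θ t) :=
  Quot.sound ⟨θ, rfl, rfl⟩

lemma continuous_mk (n : SimplexCategory) :
    Continuous fun xt : W.obj (op n) × n.toTopObj => GeomReal.mk W xt.1 xt.2 :=
  continuous_quot_mk.comp (continuous_sigmaMk (σ := fun n => W.obj (op n) × n.toTopObj))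

lemma map_injective (f : V ⟶ W) (hf : ∀ k, Function.Injective (f.app k)) :
    Function.Injective (GeomReal.map f) := by
  intro a b h
  induction a using Quot.ind with | _ p =>
  induction b using Quot.ind with | _ q =>
  have h : (GeomRealPre.map f p).normalForm = (GeomRealPre.map f q).normalForm :=
    GeomRealPre.mk_eq_mk_iff.mp h
  rw [GeomRealPre.normalForm_map f hf, GeomRealPre.normalForm_map f hf] at h
  exact GeomRealPre.mk_eq_mk_iff.mpr (GeomRealPre.map_injective f hf h)

variable (f : V ⟶ W) (C : Set (GeomReal V))

def levelImage (m : SimplexCategory) : Set (W.obj (op m) × m.toTopObj) :=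
  Prod.map (f.app (op m)) id '' {ys | GeomReal.mk V ys.1 ys.2 ∈ C}

/-- When `σ` is a section of `τ`, the simplex `(σ ≫ ι)^* x` is the `y` with `ι^* x = τ^* y`, so
the existence of such a `y` becomes a closed condition on `x`. -/
def preimagePiece {n k m : SimplexCategory} (ι : k ⟶ n) (τ : k ⟶ m) (σ : m ⟶ k) :
    Set (W.obj (op n) × n.toTopObj) :=
  Prod.map id (toTopMap ι) ''
    {xt | W.map ι.op xt.1 = W.map τ.op (W.map (σ ≫ ι).op xt.1) ∧
      (W.map (σ ≫ ι).op xt.1, toTopMap τ xt.2) ∈ levelImage f C m}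

variable {f C}

lemma isClosed_levelImage (hf : ∀ k, IsClosedEmbedding (f.app k)) (hC : IsClosed C)
    (m : SimplexCategory) : IsClosed (levelImage f C m) :=
  ((hf (op m)).prodMap IsClosedEmbedding.id).isClosedMap _ <|
    hC.preimage (continuous_mk m)

lemma isClosed_preimagePiece [∀ k, T2Space (W.obj k)] (hf : ∀ k, IsClosedEmbedding (f.app k))
    (hC : IsClosed C) {n k m : SimplexCategory} (ι : k ⟶ n) (τ : k ⟶ m) (σ : m ⟶ k) :
    IsClosed (preimagePiece f C ι τ σ) := by
  have hrestr : Continuous fun xt : W.obj (op n) × k.toTopObj => W.map (σ ≫ ι).op xt.1 :=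
    (W.map (σ ≫ ι).op).hom.continuous.comp continuous_fst
  refine (isProperMap_id.prodMap (continuous_toTopMap ι).isProperMap).isClosedMap _
    (IsClosed.inter ?_ ?_)
  · exact isClosed_eq ((W.map ι.op).hom.continuous.comp continuous_fst)
      ((W.map τ.op).hom.continuous.comp hrestr)
  · exact (isClosed_levelImage hf hC m).preimage
      (hrestr.prodMk ((continuous_toTopMap τ).comp continuous_snd))

lemma mk_mem_image_of_mem_preimagePiece {n k m : SimplexCategory} {ι : k ⟶ n} {τ : k ⟶ m}
    {σ : m ⟶ k} {x : W.obj (op n)} {t : n.toTopObj} (h : (x, t) ∈ preimagePiece f C ι τ σ) :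
    GeomReal.mk W x t ∈ GeomReal.map f '' C := by
  obtain ⟨⟨x', t₀⟩, ⟨hx, ⟨v, s⟩, hvs, hv⟩, hxt⟩ := h
  simp only [Prod.map, id, Prod.mk.injEq] at hxt hv
  obtain ⟨rfl, rfl⟩ := hxt
  obtain ⟨hv, rfl⟩ := hv
  refine ⟨_, hvs, ?_⟩
  change GeomReal.mk W (f.app (op m) v) (toTopMap τ t₀) = _
  rw [hv, ← mk_map, ← hx, mk_map]

lemma exists_mem_preimagePiece {n : SimplexCategory} {x : W.obj (op n)} {t : n.toTopObj}
    (hf : ∀ k, Function.Injective (f.app k)) (h : GeomReal.mk W x t ∈ GeomReal.map f '' C) :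
    ∃ (k m : Fin (n.len + 1)) (ι : ⦋k⦌ ⟶ n) (τ : ⦋k⦌ ⟶ ⦋m⦌) (σ : ⦋m⦌ ⟶ ⦋k⦌),
      (x, t) ∈ preimagePiece f C ι τ σ := by
  obtain ⟨a, ha, hxa⟩ := h
  obtain ⟨p, rfl⟩ := Quot.exists_rep a
  have hnf : (GeomRealPre.map f p).normalForm = GeomRealPre.normalForm ⟨n, x, t⟩ :=
    GeomRealPre.mk_eq_mk_iff.mp hxa
  obtain ⟨⟨k, ι, t₀⟩, hι, ht₀, rfl⟩ := exists_mono_isInterior_toTopMap_eq t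
  obtain ⟨⟨m, τ, y⟩, hτ, hy, hxy⟩ := exists_epi_isNondegenerate (W.map ι.op x)
  dsimp only at ι t₀ hι ht₀ τ y hτ hy hxy
  rw [GeomRealPre.normalForm_map f hf, GeomRealPre.normalForm_eq ι ht₀ τ hy hxy] at hnf
  have hp := GeomRealPre.mk_normalForm p
  generalize p.normalForm = q at hnf hp
  obtain ⟨q, v, s⟩ := q
  dsimp only [GeomRealPre.map] at hnf
  obtain ⟨rfl, hvs⟩ := Sigma.mk.inj_iff.mp hnf
  obtain ⟨rfl, hs⟩ := Prod.mk_inj.mp (eq_of_heq hvs)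
  have := isSplitEpi_of_epi τ
  have hσ : W.map (section_ τ ≫ ι).op x = f.app (op q) v := by
    rw [map_comp_apply, hxy, ← map_comp_apply, IsSplitEpi.id, map_id_apply]
  refine ⟨⟨k.len, Nat.lt_succ_of_le (len_le_of_mono ι)⟩,
    ⟨q.len, Nat.lt_succ_of_le ((len_le_of_epi τ).trans (len_le_of_mono ι))⟩, ι, τ, section_ τ,
    (x, t₀), ⟨?_, ?_⟩, rfl⟩ <;> dsimp only <;> rw [hσ]
  · exact hxy
  · exact ⟨(v, s), by rwa [← hp] at ha, Prod.ext rfl hs⟩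

lemma isClosedMap_map [∀ k, T2Space (W.obj k)] (hf : ∀ k, IsClosedEmbedding (f.app k)) :
    IsClosedMap (GeomReal.map f) := by
  intro C hC
  refine isQuotientMap_quot_mk.isClosed_preimage.mp (isClosed_sigma_iff.mpr fun n => ?_)
  change IsClosed ({xt | GeomReal.mk W xt.1 xt.2 ∈ GeomReal.map f '' C} :
    Set (W.obj (op n) × n.toTopObj))
  have hpre : ({xt | GeomReal.mk W xt.1 xt.2 ∈ GeomReal.map f '' C} :
      Set (W.obj (op n) × n.toTopObj)) =
      ⋃ (k : Fin (n.len + 1)) (m : Fin (n.len + 1)) (ι : ⦋k⦌ ⟶ n) (τ : ⦋k⦌ ⟶ ⦋m⦌)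
        (σ : ⦋m⦌ ⟶ ⦋k⦌), preimagePiece f C ι τ σ := by
    ext ⟨x, t⟩
    simp only [Set.mem_ofPred_eq, Set.mem_iUnion]
    exact ⟨exists_mem_preimagePiece fun k => (hf k).injective,
      fun ⟨_, _, _, _, _, h⟩ => mk_mem_image_of_mem_preimagePiece h⟩
  rw [hpre]
  exact isClosed_iUnion_of_finite fun _ => isClosed_iUnion_of_finite fun _ =>
    isClosed_iUnion_of_finite fun ι => isClosed_iUnion_of_finite fun τ =>
      isClosed_iUnion_of_finite fun σ => isClosed_preimagePiece hf hC ι τ σ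

theorem isClosedEmbedding_map [∀ k, T2Space (W.obj k)] (hf : ∀ k, IsClosedEmbedding (f.app k)) :
    IsClosedEmbedding (GeomReal.map f) :=
  .of_continuous_injective_isClosedMap (GeomReal.map f).continuous
    (map_injective f fun k => (hf k).injective) (isClosedMap_map hf)

end GeomReal

section GroupAction

variable {G : Type} [Group G] (W : SimplicialObject TopCat.{0})
  (ρ : G → (W ⟶ W)) (H : Subgroup G)

/-- The levelwise `H`-fixed points of an action on a simplicial space. -/
def FixedSet (k : SimplexCategoryᵒᵖ) : Set (W.obj k) :=
  { x | ∀ g ∈ H, (ρ g).app k x = x }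

lemma fixedSet_map {k l : SimplexCategoryᵒᵖ} (θ : k ⟶ l) {x : W.obj k}
    (hx : x ∈ FixedSet W ρ H k) : W.map θ x ∈ FixedSet W ρ H l := by
  intro g hg
  have h1 : (ρ g).app l (W.map θ x) = W.map θ ((ρ g).app k x) :=
    ConcreteCategory.congr_hom ((ρ g).naturality θ) x
  rw [h1, hx g hg]

/-- The simplicial space of levelwise `H`-fixed points `W^H`. -/
def FixedComplex : SimplicialObject TopCat.{0} where
  obj k := TopCat.of ↥(FixedSet W ρ H k)
  map {k l} θ := TopCat.ofHom ⟨fun x => ⟨W.map θ x.1, fixedSet_map W ρ H θ x.2⟩,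
    Continuous.subtype_mk ((W.map θ).hom.continuous.comp continuous_subtype_val) _⟩
  map_id k := by
    apply TopCat.ext
    rintro ⟨x, hx⟩
    apply Subtype.ext
    show W.map (𝟙 k) x = x
    rw [W.map_id]
    rfl
  map_comp {k l j} θ θ' := by
    apply TopCat.ext
    rintro ⟨x, hx⟩
    apply Subtype.ext
    show W.map (θ ≫ θ') x = W.map θ' (W.map θ x)
    rw [W.map_comp]
    rfl

/-- The inclusion `W^H → W` of the levelwise fixed points. -/
def fixedInclusion : FixedComplex W ρ H ⟶ W where
  app k := TopCat.ofHom ⟨Subtype.val, continuous_subtype_val⟩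
  naturality _ _ _ := rfl

lemma geomReal_map_fixed (p : GeomReal (FixedComplex W ρ H)) (g : G) (hg : g ∈ H) :
    GeomReal.map (ρ g) (GeomReal.map (fixedInclusion W ρ H) p) =
      GeomReal.map (fixedInclusion W ρ H) p := by
  induction p using Quot.ind with
  | _ q =>
    obtain ⟨n, z, t⟩ := q
    have h1 : GeomReal.map (fixedInclusion W ρ H) (Quot.mk _ ⟨n, (z, t)⟩) =
        GeomReal.mk W z.1 t := rfl
    have h2 : GeomReal.map (ρ g) (GeomReal.mk W z.1 t) =
        GeomReal.mk W ((ρ g).app (op n) z.1) t := rfl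
    rw [h1, h2, z.2 g hg]

open Topology in
lemma isClosedEmbedding_fixedInclusion_app (hT2 : ∀ k : SimplexCategoryᵒᵖ, T2Space (W.obj k))
    (k : SimplexCategoryᵒᵖ) : IsClosedEmbedding ((fixedInclusion W ρ H).app k) := by
  have : FixedSet W ρ H k = ⋂ g ∈ H, {x | (ρ g).app k x = x} := by
    ext
    simp [FixedSet]
  refine IsClosed.isClosedEmbedding_subtypeVal ?_
  rw [this]
  exact isClosed_biInter fun g _ => isClosed_eq ((ρ g).app k).hom.continuous continuous_id

lemma exists_map_fixedInclusion_eq {z : GeomReal W} (hz : ∀ g ∈ H, GeomReal.map (ρ g) z = z) :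
    ∃ p, GeomReal.map (fixedInclusion W ρ H) p = z := by
  obtain ⟨p, rfl⟩ := Quot.exists_rep z
  have hy := GeomRealPre.isNondegenerate_normalForm p
  have hs := GeomRealPre.isInterior_normalForm p
  rw [← GeomRealPre.mk_normalForm p] at hz ⊢
  generalize p.normalForm = q at hz hy hs
  obtain ⟨c, y, s⟩ := q
  have hfix : y ∈ FixedSet W ρ H (op c) := fun g hg => GeomRealPre.eq_of_mk_eq_mk hy hs (hz g hg)
  exact ⟨GeomReal.mk _ (⟨y, hfix⟩ : (FixedComplex W ρ H).obj (op c)) s, rfl⟩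

theorem isHomeomorph_fixedPoints_realization
    (hT2 : ∀ k : SimplexCategoryᵒᵖ, T2Space (W.obj k)) :
    IsHomeomorph (fun p : GeomReal (FixedComplex W ρ H) =>
      (⟨GeomReal.map (fixedInclusion W ρ H) p, fun g hg => geomReal_map_fixed W ρ H p g hg⟩ :
        { z : GeomReal W // ∀ g ∈ H, GeomReal.map (ρ g) z = z })) := by
  have hemb := GeomReal.isClosedEmbedding_map (isClosedEmbedding_fixedInclusion_app W ρ H hT2)
  refine isHomeomorph_iff_isEmbedding_surjective.mpr
    ⟨hemb.isEmbedding.codRestrict {z | ∀ g ∈ H, GeomReal.map (ρ g) z = z}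
      fun p g hg => geomReal_map_fixed W ρ H p g hg, ?_⟩
  rintro ⟨z, hz⟩
  obtain ⟨p, rfl⟩ := exists_map_fixedInclusion_eq W ρ H hz
  exact ⟨p, rfl⟩

end GroupAction


end
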